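/- Let e(n) = deg B_n(t) be the degree of the n-th Stern polynomial. Then for every natural number n, the smallest positive integer i with e(i) = n is i = 2^n, and the largest positive integer i with e(i) = n is i = (4^{n+1} - 1)/3. -/

import Mathlib

open Polynomial

/-- The Stern polynomials: `B 0 = 0`, `B 1 = 1`, `B (2n) = t * B n`,
`B (2n+1) = B n + B (n+1)`. -/
noncomputable def stern : ℕ → Polynomial ℤ
  | 0 => 0
  | 1 => 1
  | n + 2 =>
    if _h : n % 2 = 0 then
      X * stern (n / 2 + 1)
    else
      stern (n / 2 + 1) + stern (n / 2 + 2)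
  decreasing_by all_goals omega

/-- `e n` is the degree of the `n`-th Stern polynomial. -/
noncomputable def e (n : ℕ) : ℕ := (stern n).natDegree

/-!
All leading coefficients of the Stern polynomials are positive, so no cancellation occurs in
`B (2n+1) = B n + B (n+1)` and the degrees obey `e (2n) = e n + 1`,
`e (2n+1) = max (e n) (e (n+1))`. Along these recurrences, `2 ^ e i ≤ i` with equality at
`i = 2 ^ n`, and `3 i + 1 ≤ 4 ^ (e i + 1)`, comparing `i = 2m` with `m`, `i = 4k + 1`
with `k` and `i = 4k + 3` with `k + 1`: each such `j` has `e j < e i` and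
`3 i + 1 ≤ 4 (3 j + 1)`. Equality holds at `M n = (4 ^ (n+1) - 1) / 3 = (1010…101)₂`, since
`M (n+1) = 2 (2 M n) + 1` and `e (M n) = n`, `e (M n + 1) = n + 1`.
-/

namespace Polynomial

variable {R : Type*} [Semiring R] [PartialOrder R] [IsStrictOrderedRing R] {p q : R[X]}

theorem natDegree_add_of_leadingCoeff_pos (hp : 0 < p.leadingCoeff) (hq : 0 < q.leadingCoeff) :
    (p + q).natDegree = max p.natDegree q.natDegree := by
  have hpq := degree_add_eq_of_leadingCoeff_add_ne_zero (add_pos hp hq).ne'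
  rw [degree_eq_natDegree (leadingCoeff_ne_zero.mp hp.ne'),
    degree_eq_natDegree (leadingCoeff_ne_zero.mp hq.ne')] at hpq
  exact natDegree_eq_of_degree_eq_some (hpq.trans (WithBot.coe_max _ _).symm)

theorem leadingCoeff_add_pos (hp : 0 < p.leadingCoeff) (hq : 0 < q.leadingCoeff) :
    0 < (p + q).leadingCoeff := by
  rcases lt_trichotomy p.degree q.degree with hlt | heq | hgt
  · rwa [leadingCoeff_add_of_degree_lt hlt]
  · rw [leadingCoeff_add_of_degree_eq heq (add_pos hp hq).ne']
    exact add_pos hp hq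
  · rwa [leadingCoeff_add_of_degree_lt' hgt]

end Polynomial

@[elab_as_elim]
theorem Nat.pos_induction_by_halving {P : ∀ n, 0 < n → Prop} (one : P 1 Nat.one_pos)
    (two_mul : ∀ n hn, P n hn → P (2 * n) (by omega))
    (two_mul_add_one : ∀ n hn, P n hn → P (n + 1) n.succ_pos → P (2 * n + 1) (by omega))
    (n : ℕ) (hn : 0 < n) : P n hn := by
  induction n using Nat.strong_induction_on with
  | _ n ih =>
    obtain ⟨m, rfl | rfl⟩ := Nat.even_or_odd' n
    · exact two_mul m (by omega) (ih m (by omega) _)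
    · rcases Nat.eq_zero_or_pos m with rfl | hm
      · exact one
      · exact two_mul_add_one m hm (ih m (by omega) hm) (ih (m + 1) (by omega) _)

theorem stern_zero : stern 0 = 0 := by rw [stern]

theorem stern_one : stern 1 = 1 := by rw [stern]

theorem stern_two_mul (n : ℕ) : stern (2 * n) = X * stern n := by
  rcases n with _ | m
  · simp [stern_zero]
  · rw [show 2 * (m + 1) = 2 * m + 2 by ring, stern, dif_pos (by omega)]
    congr 2
    omega

theorem stern_two_mul_add_one (n : ℕ) : stern (2 * n + 1) = stern n + stern (n + 1) := by
  rcases n with _ | m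
  · simp [stern_zero]
  · rw [show 2 * (m + 1) + 1 = (2 * m + 1) + 2 by ring, stern, dif_neg (by omega)]
    congr 2 <;> omega

theorem stern_leadingCoeff_pos {n : ℕ} (hn : 0 < n) : 0 < (stern n).leadingCoeff := by
  induction n, hn using Nat.pos_induction_by_halving with
  | one => simp [stern_one]
  | two_mul n _ ih => rwa [stern_two_mul, mul_comm, leadingCoeff_mul_X]
  | two_mul_add_one n _ ih ih' => rw [stern_two_mul_add_one]; exact leadingCoeff_add_pos ih ih'

theorem stern_ne_zero {n : ℕ} (hn : 0 < n) : stern n ≠ 0 :=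
  leadingCoeff_ne_zero.mp (stern_leadingCoeff_pos hn).ne'

theorem e_one : e 1 = 0 := by simp [e, stern_one]

theorem e_two_mul {n : ℕ} (hn : 0 < n) : e (2 * n) = e n + 1 := by
  rw [e, stern_two_mul, natDegree_X_mul (stern_ne_zero hn), e]

theorem e_two_mul_add_one (n : ℕ) : e (2 * n + 1) = max (e n) (e (n + 1)) := by
  rcases Nat.eq_zero_or_pos n with rfl | hn
  · simp [e, stern_zero, stern_one]
  · rw [e, e, e, stern_two_mul_add_one]
    exact natDegree_add_of_leadingCoeff_pos (stern_leadingCoeff_pos hn)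
      (stern_leadingCoeff_pos n.succ_pos)

theorem e_two_pow (n : ℕ) : e (2 ^ n) = n := by
  induction n with
  | zero => exact e_one
  | succ n ih => rw [pow_succ', e_two_mul (Nat.two_pow_pos n), ih]

theorem two_pow_e_le {i : ℕ} (hi : 0 < i) : 2 ^ e i ≤ i := by
  induction i, hi using Nat.pos_induction_by_halving with
  | one => simp [e_one]
  | two_mul n hn ih => rw [e_two_mul hn, pow_succ]; omega
  | two_mul_add_one n _ ih ih' =>
    rw [e_two_mul_add_one]
    rcases max_choice (e n) (e (n + 1)) with h | h <;> rw [h] <;> omega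

theorem e_add_one_le_e_four_mul_add_one {k : ℕ} (hk : 0 < k) : e k + 1 ≤ e (4 * k + 1) := by
  rw [show 4 * k + 1 = 2 * (2 * k) + 1 by ring, e_two_mul_add_one, e_two_mul hk]
  exact le_max_left _ _

theorem e_add_one_le_e_four_mul_add_three (k : ℕ) : e (k + 1) + 1 ≤ e (4 * k + 3) := by
  rw [show 4 * k + 3 = 2 * (2 * k + 1) + 1 by ring, e_two_mul_add_one,
    show 2 * k + 1 + 1 = 2 * (k + 1) by ring, e_two_mul k.succ_pos]
  exact le_max_right _ _

theorem three_mul_add_one_le_four_pow_e {i : ℕ} (hi : 0 < i) : 3 * i + 1 ≤ 4 ^ (e i + 1) := by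
  induction i using Nat.strong_induction_on with
  | _ i ih =>
    have of_lt (j : ℕ) (hj : 0 < j) (hji : j < i) (hsize : 3 * i + 1 ≤ 4 * (3 * j + 1))
        (hdeg : e j + 1 ≤ e i) : 3 * i + 1 ≤ 4 ^ (e i + 1) :=
      calc 3 * i + 1 ≤ 4 * 4 ^ (e j + 1) := hsize.trans (by have := ih j hji hj; omega)
        _ = 4 ^ (e j + 1 + 1) := (pow_succ' 4 _).symm
        _ ≤ 4 ^ (e i + 1) := Nat.pow_le_pow_right (by norm_num) (by omega)
    obtain ⟨m, rfl | rfl⟩ := Nat.even_or_odd' i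
    · exact of_lt m (by omega) (by omega) (by omega) (e_two_mul (by omega)).ge
    obtain ⟨k, rfl | rfl⟩ := Nat.even_or_odd' m
    · rcases Nat.eq_zero_or_pos k with rfl | hk
      · simp [e_one]
      · refine of_lt k hk (by omega) (by omega) ?_
        rw [show 2 * (2 * k) + 1 = 4 * k + 1 by ring]
        exact e_add_one_le_e_four_mul_add_one hk
    · refine of_lt (k + 1) k.succ_pos (by omega) (by omega) ?_
      rw [show 2 * (2 * k + 1) + 1 = 4 * k + 3 by ring]
      exact e_add_one_le_e_four_mul_add_three k

theorem three_mul_four_pow_sub_one_div_three_add_one (n : ℕ) :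
    3 * ((4 ^ n - 1) / 3) + 1 = 4 ^ n := by
  have h3 : 3 ∣ 4 ^ n - 1 := by simpa using Nat.sub_dvd_pow_sub_pow 4 1 n
  rw [Nat.mul_div_cancel' h3]
  exact Nat.sub_add_cancel (Nat.one_le_pow _ _ (by norm_num))

theorem four_pow_succ_sub_one_div_three_pos (n : ℕ) : 0 < (4 ^ (n + 1) - 1) / 3 :=
  Nat.div_pos (by have := Nat.le_self_pow n.succ_ne_zero 4; omega) (by norm_num)

theorem e_four_pow_sub_one_div_three (n : ℕ) :
    e ((4 ^ (n + 1) - 1) / 3) = n ∧ e ((4 ^ (n + 1) - 1) / 3 + 1) = n + 1 := by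
  induction n with
  | zero => exact ⟨e_one, by simpa [e_one] using e_two_mul Nat.one_pos⟩
  | succ n ih =>
    set m := (4 ^ (n + 1) - 1) / 3
    have hm := three_mul_four_pow_sub_one_div_three_add_one (n + 1)
    have hm' := three_mul_four_pow_sub_one_div_three_add_one (n + 2)
    have h2m : e (2 * m) = n + 1 := by rw [e_two_mul (four_pow_succ_sub_one_div_three_pos n), ih.1]
    have h2m1 : e (2 * m + 1) = n + 1 := by rw [e_two_mul_add_one, ih.1, ih.2]; omega
    rw [pow_succ] at hm'
    constructor
    · rw [show (4 ^ (n + 1 + 1) - 1) / 3 = 2 * (2 * m) + 1 by omega, e_two_mul_add_one, h2m, h2m1]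
      exact max_self _
    · rw [show (4 ^ (n + 1 + 1) - 1) / 3 + 1 = 2 * (2 * m + 1) by omega, e_two_mul (by omega),
        h2m1]

theorem stern_degree_least_greatest_index (n : ℕ) :
    IsLeast {i : ℕ | 1 ≤ i ∧ e i = n} (2 ^ n) ∧
    IsGreatest {i : ℕ | 1 ≤ i ∧ e i = n} ((4 ^ (n + 1) - 1) / 3) := by
  refine ⟨⟨⟨Nat.one_le_two_pow, e_two_pow n⟩, ?_⟩,
    ⟨⟨four_pow_succ_sub_one_div_three_pos n, (e_four_pow_sub_one_div_three n).1⟩, ?_⟩⟩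
  · rintro i ⟨hi, rfl⟩
    exact two_pow_e_le hi
  · rintro i ⟨hi, rfl⟩
    have := three_mul_add_one_le_four_pow_e hi
    have := three_mul_four_pow_sub_one_div_three_add_one (e i + 1)
    omega
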